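/- For every real c > 0 there exists a constant K > 0 (depending only on c) such that for every finite simple directed graph G=(V,E) and every ρ ∈ (0,1], if every vertex v ∈ V satisfies d^in(v) ≥ (c/ρ)·ln(e/ρ), then min-seed^{(1)}(G,ρ) ≤ K·ρ·|V|. -/

import Mathlib

/-- The in-neighborhood of `v` in the directed graph with edge relation `E`. -/
def inNbr {V : Type*} (E : V → V → Prop) (v : V) : Set V := {u | E u v}

/-- One round of the synchronous reversible cascade on a directed graph with edge
relation `E`: `dactive E ρ S k` is the set of active vertices in round `k`. -/
def dactive {V : Type*} (E : V → V → Prop) (ρ : ℝ) (S : Set V) : ℕ → Set V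
  | 0 => S
  | k + 1 =>
      {v | 0 < (inNbr E v).ncard ∧
        ρ * (inNbr E v).ncard ≤ ((inNbr E v ∩ dactive E ρ S k).ncard : ℝ)} ∪
      {v | v ∈ S ∧ (inNbr E v).ncard = 0}

/-- `dminSeed E ρ k` is the minimum number of seeds activating all vertices in round `k`. -/
noncomputable def dminSeed {V : Type*} (E : V → V → Prop) (ρ : ℝ) (k : ℕ) : ℕ :=
  sInf {m | ∃ S : Set V, S.ncard = m ∧ dactive E ρ S k = Set.univ}

/-!
Choose each vertex independently with probability `q = (4/c + 2)ρ`. A vertex of in-degree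
`d` misses the threshold `r = ρd` with probability at most
`2^r 𝔼[2^{-|N ∩ S|}] ≤ e^{r - qd/2} = e^{-2r/c}`, and repairing it costs at most `r + 1`
extra seeds (any `⌈r⌉` of its in-neighbours). As `r ≥ c log(e/ρ)`, the expected repair cost
`(r + 1) e^{-2r/c}` per vertex is at most `(c + 1)ρ`, so some repaired seed set has size at
most `(4/c + 2 + c + 1) ρ |V|`.
-/

open Finset

namespace Bernoulli
variable {V : Type*} [Fintype V] [DecidableEq V]

/-- `∑ S, weight q S * f S` is the expectation of `f` on a random subset containing each
element independently with probability `q`. -/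
def weight (q : ℝ) (S : Finset V) : ℝ := q ^ #S * (1 - q) ^ #Sᶜ

lemma sum_weight_mul_prod (q : ℝ) (h : V → ℝ) :
    ∑ S, weight q S * ∏ u ∈ S, h u = ∏ u, (q * h u + (1 - q)) := by
  rw [prod_add, powerset_univ]
  refine sum_congr rfl fun S _ => ?_
  rw [weight, prod_mul_distrib, prod_const, prod_const, ← compl_eq_univ_sdiff]
  ring

lemma sum_weight_mul_pow_card_inter (q t : ℝ) (A : Finset V) :
    ∑ S, weight q S * t ^ #(A ∩ S) = (q * t + (1 - q)) ^ #A := by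
  have key := sum_weight_mul_prod q (fun u => if u ∈ A then t else 1)
  have hfactor : ∀ u, q * (if u ∈ A then t else 1) + (1 - q)
      = if u ∈ A then q * t + (1 - q) else 1 := fun u => by split_ifs <;> ring
  simp only [hfactor, prod_ite_mem, univ_inter, prod_const] at key
  simpa only [inter_comm] using key

lemma sum_weight (q : ℝ) : ∑ S : Finset V, weight q S = 1 := by
  simpa using sum_weight_mul_pow_card_inter q 1 (∅ : Finset V)

lemma sum_weight_mul_ite_mem (q : ℝ) (u : V) :
    ∑ S, weight q S * (if u ∈ S then 1 else 0) = q := by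
  have h := sum_weight_mul_pow_card_inter q 0 {u}
  have hcompl : ∀ S : Finset V, (0 : ℝ) ^ #({u} ∩ S) = 1 - if u ∈ S then 1 else 0 := by
    intro S; by_cases hu : u ∈ S <;> simp [hu]
  simp only [hcompl, mul_sub, mul_one, sum_sub_distrib, sum_weight, card_singleton] at h
  linarith

lemma sum_weight_mul_card (q : ℝ) :
    ∑ S : Finset V, weight q S * #S = q * Fintype.card V := by
  calc ∑ S : Finset V, weight q S * #S
      = ∑ S : Finset V, ∑ u, weight q S * (if u ∈ S then 1 else 0) := by
        refine sum_congr rfl fun S _ => ?_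
        rw [← mul_sum, sum_boole, filter_mem_eq_inter, univ_inter]
    _ = q * Fintype.card V := by
        rw [sum_comm]
        simp only [sum_weight_mul_ite_mem, sum_const, card_univ, nsmul_eq_mul]
        ring

lemma weight_nonneg {q : ℝ} (hq0 : 0 ≤ q) (hq1 : q ≤ 1) (S : Finset V) : 0 ≤ weight q S := by
  unfold weight; have : 0 ≤ 1 - q := by linarith
  positivity

lemma weight_pos {q : ℝ} (hq0 : 0 < q) (hq1 : q < 1) (S : Finset V) : 0 < weight q S := by
  unfold weight; have : 0 < 1 - q := by linarith
  positivity

lemma exists_le_of_sum_weight_mul_le {q : ℝ} (hq0 : 0 < q) (hq1 : q < 1) {f : Finset V → ℝ}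
    {B : ℝ} (h : ∑ S, weight q S * f S ≤ B) : ∃ S, f S ≤ B := by
  obtain ⟨S, -, hS⟩ := exists_le_of_sum_le univ_nonempty
    (h.trans_eq (by rw [← sum_mul, sum_weight, one_mul]) :
      ∑ S, weight q S * f S ≤ ∑ S, weight q S * B)
  exact ⟨S, le_of_mul_le_mul_left hS (weight_pos hq0 hq1 S)⟩

lemma sum_weight_mul_ite_card_inter_lt_le_exp {q : ℝ} (hq0 : 0 ≤ q) (hq1 : q ≤ 1)
    (A : Finset V) (r : ℝ) :
    ∑ S, weight q S * (if (#(A ∩ S) : ℝ) < r then 1 else 0)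
      ≤ Real.exp (Real.log 2 * r - q * #A / 2) := by
  -- Markov's inequality for `2 ^ (r - #(A ∩ S))`
  have hmarkov : ∀ S : Finset V, (if (#(A ∩ S) : ℝ) < r then 1 else 0)
      ≤ Real.exp (Real.log 2 * r) * (1 / 2) ^ #(A ∩ S) := by
    intro S
    split_ifs with hS
    · rw [← Real.exp_log (by norm_num : (0:ℝ) < 1 / 2), ← Real.exp_nat_mul, ← Real.exp_add,
        Real.one_le_exp_iff]
      have : 0 ≤ Real.log 2 := Real.log_nonneg (by norm_num)
      simp only [one_div, Real.log_inv]
      nlinarith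
    · positivity
  calc ∑ S, weight q S * (if (#(A ∩ S) : ℝ) < r then 1 else 0)
      ≤ ∑ S, weight q S * (Real.exp (Real.log 2 * r) * (1 / 2) ^ #(A ∩ S)) :=
        sum_le_sum fun S _ => mul_le_mul_of_nonneg_left (hmarkov S) (weight_nonneg hq0 hq1 S)
    _ = Real.exp (Real.log 2 * r) * (1 - q / 2) ^ #A := by
        simp_rw [mul_left_comm (weight q _), ← mul_sum, sum_weight_mul_pow_card_inter]
        ring_nf
    _ ≤ Real.exp (Real.log 2 * r) * Real.exp (-(q / 2)) ^ #A := by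
        gcongr
        · linarith
        · linarith [Real.add_one_le_exp (-(q / 2))]
    _ = Real.exp (Real.log 2 * r - q * #A / 2) := by
        rw [← Real.exp_nat_mul, ← Real.exp_add]; ring_nf

end Bernoulli

lemma add_one_mul_exp_neg_le {c ρ r : ℝ} (hc : 0 < c) (hρ0 : 0 < ρ) (hρ1 : ρ ≤ 1)
    (hr : c * Real.log (Real.exp 1 / ρ) ≤ r) :
    (r + 1) * Real.exp (-(2 / c * r)) ≤ (c + 1) * ρ := by
  set y := r / c
  have hry : r = c * y := (mul_div_cancel₀ r hc.ne').symm
  have hexp : Real.exp (-y) ≤ ρ := calc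
    Real.exp (-y) ≤ Real.exp (-Real.log (Real.exp 1 / ρ)) := by
      gcongr; rw [le_div_iff₀ hc]; linarith
    _ = ρ / Real.exp 1 := by
      rw [Real.exp_neg, Real.exp_log (by positivity), inv_div]
    _ ≤ ρ := div_le_self hρ0.le (Real.one_le_exp zero_le_one)
  have hyexp : y * Real.exp (-y) ≤ 1 :=
    (Real.mul_exp_neg_le_exp_neg_one y).trans (Real.exp_le_one_iff.2 (by norm_num))
  have hsplit : Real.exp (-(2 / c * r)) = Real.exp (-y) * Real.exp (-y) := by
    rw [← Real.exp_add, hry]; field_simp; ring_nf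
  have hpos := Real.exp_pos (-y)
  calc (r + 1) * Real.exp (-(2 / c * r))
      = c * (y * Real.exp (-y)) * Real.exp (-y) + Real.exp (-y) * Real.exp (-y) := by
        rw [hsplit, hry]; ring
    _ ≤ c * 1 * ρ + ρ * 1 := by gcongr; exact hexp.trans hρ1
    _ = (c + 1) * ρ := by ring

section Activation
variable {ι V : Type*} [Fintype ι] [DecidableEq V]

def ActivatesAll (ρ : ℝ) (N : ι → Finset V) (S : Finset V) : Prop :=
  ∀ i, ρ * #(N i) ≤ #(N i ∩ S)

/-- The size of `S` together with `⌈ρ #(N i)⌉` elements of `N i` for each `i` at which `S`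
falls short. -/
noncomputable def patchCost (ρ : ℝ) (N : ι → Finset V) (S : Finset V) : ℝ :=
  #S + ∑ i, if (#(N i ∩ S) : ℝ) < ρ * #(N i) then ρ * #(N i) + 1 else 0

lemma exists_activatesAll_card_le_patchCost {ρ : ℝ} (hρ0 : 0 ≤ ρ) (hρ1 : ρ ≤ 1)
    (N : ι → Finset V) (S : Finset V) :
    ∃ S', ActivatesAll ρ N S' ∧ (#S' : ℝ) ≤ patchCost ρ N S := by
  have hT : ∀ i, ∃ T ⊆ N i, #T = ⌈ρ * #(N i)⌉₊ := fun i =>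
    exists_subset_card_eq (Nat.ceil_le.2 (mul_le_of_le_one_left (by positivity) hρ1))
  choose T hTsub hTcard using hT
  set F := univ.filter fun i => (#(N i ∩ S) : ℝ) < ρ * #(N i)
  refine ⟨S ∪ F.biUnion T, fun i => ?_, ?_⟩
  · by_cases hi : (#(N i ∩ S) : ℝ) < ρ * #(N i)
    · have hsub : T i ⊆ N i ∩ (S ∪ F.biUnion T) := fun u hu =>
        mem_inter.2 ⟨hTsub i hu, mem_union_right _ (mem_biUnion.2 ⟨i, by simpa [F], hu⟩)⟩
      calc ρ * #(N i) ≤ ⌈ρ * #(N i)⌉₊ := Nat.le_ceil _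
        _ = #(T i) := by rw [hTcard]
        _ ≤ #(N i ∩ (S ∪ F.biUnion T)) := by exact_mod_cast card_le_card hsub
    · calc ρ * #(N i) ≤ #(N i ∩ S) := not_lt.1 hi
        _ ≤ #(N i ∩ (S ∪ F.biUnion T)) := by
          exact_mod_cast card_le_card (inter_subset_inter_left subset_union_left)
  · have hcard : #(S ∪ F.biUnion T) ≤ #S + ∑ i ∈ F, #(T i) :=
      (card_union_le _ _).trans (Nat.add_le_add_left card_biUnion_le _)
    calc (#(S ∪ F.biUnion T) : ℝ) ≤ #S + ∑ i ∈ F, (#(T i) : ℝ) := by exact_mod_cast hcard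
      _ ≤ #S + ∑ i ∈ F, (ρ * #(N i) + 1) := by
        gcongr with i
        rw [hTcard]
        exact (Nat.ceil_lt_add_one (by positivity)).le
      _ = patchCost ρ N S := by rw [patchCost, sum_filter]

variable [Fintype V]

lemma sum_weight_mul_patchCost_term_le {c ρ : ℝ} (hc : 0 < c) (hρ0 : 0 < ρ) (hρ1 : ρ ≤ 1)
    (hq : (4 / c + 2) * ρ ≤ 1) (A : Finset V)
    (hA : c / ρ * Real.log (Real.exp 1 / ρ) ≤ #A) :
    ∑ S, Bernoulli.weight ((4 / c + 2) * ρ) S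
        * (if (#(A ∩ S) : ℝ) < ρ * #A then ρ * #A + 1 else 0) ≤ (c + 1) * ρ := by
  set r := ρ * #A
  have hr : c * Real.log (Real.exp 1 / ρ) ≤ r := calc
    c * Real.log (Real.exp 1 / ρ) = ρ * (c / ρ * Real.log (Real.exp 1 / ρ)) := by field_simp
    _ ≤ r := mul_le_mul_of_nonneg_left hA hρ0.le
  have hfactor : ∀ S : Finset V, (if (#(A ∩ S) : ℝ) < r then r + 1 else 0)
      = (r + 1) * (if (#(A ∩ S) : ℝ) < r then 1 else 0) := fun S => by split_ifs <;> ring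
  have hexponent : Real.log 2 * r - (4 / c + 2) * ρ * #A / 2 ≤ -(2 / c * r) := by
    have hlog2 : Real.log 2 * r ≤ r :=
      mul_le_of_le_one_left (by positivity) (by linarith [Real.log_two_lt_d9])
    have hq : (4 / c + 2) * ρ * #A / 2 = 2 / c * r + r := by simp only [r]; ring
    linarith
  calc ∑ S, Bernoulli.weight ((4 / c + 2) * ρ) S * (if (#(A ∩ S) : ℝ) < r then r + 1 else 0)
      = (r + 1) * ∑ S, Bernoulli.weight ((4 / c + 2) * ρ) S
          * (if (#(A ∩ S) : ℝ) < r then 1 else 0) := by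
        simp_rw [hfactor, mul_left_comm _ (r + 1), ← mul_sum]
    _ ≤ (r + 1) * Real.exp (Real.log 2 * r - (4 / c + 2) * ρ * #A / 2) := by
        gcongr
        exact Bernoulli.sum_weight_mul_ite_card_inter_lt_le_exp (by positivity) hq A r
    _ ≤ (r + 1) * Real.exp (-(2 / c * r)) := by gcongr
    _ ≤ (c + 1) * ρ := add_one_mul_exp_neg_le hc hρ0 hρ1 hr

lemma sum_weight_mul_patchCost_le {c ρ : ℝ} (hc : 0 < c) (hρ0 : 0 < ρ) (hρ1 : ρ ≤ 1)
    (hq : (4 / c + 2) * ρ ≤ 1) (N : ι → Finset V)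
    (hN : ∀ i, c / ρ * Real.log (Real.exp 1 / ρ) ≤ #(N i)) :
    ∑ S, Bernoulli.weight ((4 / c + 2) * ρ) S * patchCost ρ N S
      ≤ ((4 / c + 2) * Fintype.card V + (c + 1) * Fintype.card ι) * ρ := by
  simp only [patchCost, mul_add, mul_sum, sum_add_distrib]
  rw [Bernoulli.sum_weight_mul_card, sum_comm]
  calc (4 / c + 2) * ρ * Fintype.card V + ∑ i, ∑ S, Bernoulli.weight ((4 / c + 2) * ρ) S
        * (if (#(N i ∩ S) : ℝ) < ρ * #(N i) then ρ * #(N i) + 1 else 0)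
      ≤ (4 / c + 2) * ρ * Fintype.card V + ∑ _i : ι, (c + 1) * ρ := by
        gcongr with i
        exact sum_weight_mul_patchCost_term_le hc hρ0 hρ1 hq (N i) (hN i)
    _ = ((4 / c + 2) * Fintype.card V + (c + 1) * Fintype.card ι) * ρ := by
        rw [sum_const, card_univ, nsmul_eq_mul]; ring

theorem exists_activatesAll_card_le {c ρ : ℝ} (hc : 0 < c) (hρ0 : 0 < ρ) (hρ1 : ρ ≤ 1)
    (N : ι → Finset V) (hN : ∀ i, c / ρ * Real.log (Real.exp 1 / ρ) ≤ #(N i)) :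
    ∃ S, ActivatesAll ρ N S ∧
      (#S : ℝ) ≤ ((4 / c + 2) * Fintype.card V + (c + 1) * Fintype.card ι) * ρ := by
  rcases lt_or_ge ((4 / c + 2) * ρ) 1 with hq | hq
  · obtain ⟨S, hS⟩ := Bernoulli.exists_le_of_sum_weight_mul_le (by positivity) hq
      (sum_weight_mul_patchCost_le hc hρ0 hρ1 hq.le N hN)
    obtain ⟨S', hS'act, hS'card⟩ := exists_activatesAll_card_le_patchCost hρ0.le hρ1 N S
    exact ⟨S', hS'act, hS'card.trans hS⟩
  · refine ⟨univ, fun i => ?_, ?_⟩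
    · rw [inter_univ]
      exact mul_le_of_le_one_left (by positivity) hρ1
    · have : 0 ≤ (c + 1) * Fintype.card ι * ρ := by positivity
      calc (#(univ : Finset V) : ℝ) = 1 * Fintype.card V := by rw [card_univ, one_mul]
        _ ≤ (4 / c + 2) * ρ * Fintype.card V := by gcongr
        _ ≤ _ := by linarith

end Activation

lemma dminSeed_one_le_ncard {V : Type*} (E : V → V → Prop) (ρ : ℝ) (S : Set V)
    (hpos : ∀ v, 0 < (inNbr E v).ncard)
    (hS : ∀ v, ρ * (inNbr E v).ncard ≤ ((inNbr E v ∩ S).ncard : ℝ)) :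
    dminSeed E ρ 1 ≤ S.ncard :=
  Nat.sInf_le ⟨S, rfl, Set.eq_univ_of_forall fun v => Or.inl ⟨hpos v, hS v⟩⟩

theorem stmt_9 (c : ℝ) (hc : 0 < c) :
    ∃ K : ℝ, 0 < K ∧
      ∀ (V : Type) [Fintype V] (E : V → V → Prop), Irreflexive E →
        ∀ ρ : ℝ, 0 < ρ → ρ ≤ 1 →
          (∀ v : V, c / ρ * Real.log (Real.exp 1 / ρ) ≤ ((inNbr E v).ncard : ℝ)) →
          (dminSeed E ρ 1 : ℝ) ≤ K * ρ * (Fintype.card V) := by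
  refine ⟨4 / c + 2 + (c + 1), by positivity, fun V _ E _ ρ hρ0 hρ1 hdeg => ?_⟩
  classical
  have hN : ∀ v, (inNbr E v).ncard = #(inNbr E v).toFinset := fun v =>
    Set.ncard_eq_toFinset_card' _
  obtain ⟨S, hSact, hScard⟩ := exists_activatesAll_card_le hc hρ0 hρ1
    (fun v => (inNbr E v).toFinset) (by simpa only [hN] using hdeg)
  have hlog : 0 < Real.log (Real.exp 1 / ρ) :=
    Real.log_pos ((one_lt_div hρ0).2 (hρ1.trans_lt (Real.one_lt_exp_iff.2 one_pos)))
  have hpos : ∀ v, 0 < (inNbr E v).ncard := fun v => by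
    have : (0 : ℝ) < c / ρ * Real.log (Real.exp 1 / ρ) := by positivity
    exact_mod_cast this.trans_le (hdeg v)
  have hact : ∀ v, ρ * (inNbr E v).ncard ≤ ((inNbr E v ∩ ↑S).ncard : ℝ) := fun v => by
    have := hSact v
    rwa [← hN, ← Set.ncard_coe_finset, coe_inter, Set.coe_toFinset] at this
  calc (dminSeed E ρ 1 : ℝ) ≤ S.card := by
        exact_mod_cast Set.ncard_coe_finset S ▸ dminSeed_one_le_ncard E ρ S hpos hact
    _ ≤ (4 / c + 2 + (c + 1)) * ρ * Fintype.card V := by linarith
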